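/- arXiv:0802.1919 — 3 statements merged into one kernel-verified Lean document; each statement's English description precedes it below -/
import Mathlib

section
/- The stationary distribution of the 'zero chain' Markov chain P on state space {1,…,n} with P(x,x−1) = 2x(x−1)/(5n(n−1)), P(x,x+1) = 6x(n−x)/(5n(n−1)), P(x,x) = 1 − 2x(3n−2x−1)/(5n(n−1)) is π₀(x) = 3^x · C(n,x)/(4^n − 1), i.e., Σ_{y} P(y,x) π₀(y) = π₀(x) for all x ∈ {1,…,n}. -/
/-!
The chain is a birth–death chain in detailed balance with the weights `3^x C(n,x)`:
`(x+1) C(n,x+1) = (n-x) C(n,x)` gives `π₀(x+1)/π₀(x) = 3(n-x)/(x+1) = P(x,x+1)/P(x+1,x)`.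
Detailed balance turns the column sum `Σ_y P(y,x) π₀(y)` into `π₀(x) Σ_y P(x,y)`, and the rows
of `P` sum to one because the boundary transitions `P(1,0)` and `P(n,n+1)` vanish.
-/

/-- Transition matrix of the "zero chain" on `{1,…,n}`:
`P(x,x−1) = 2x(x−1)/(5n(n−1))`, `P(x,x+1) = 6x(n−x)/(5n(n−1))`,
`P(x,x) = 1 − 2x(3n−2x−1)/(5n(n−1))`, all other entries zero. -/
noncomputable def zeroChain (n : ℕ) (x y : ℕ) : ℝ :=
  if y = x + 1 then 6 * x * ((n : ℝ) - x) / (5 * n * (n - 1))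
  else if x = y + 1 then 2 * x * ((x : ℝ) - 1) / (5 * n * (n - 1))
  else if y = x then 1 - 2 * x * (3 * (n : ℝ) - 2 * x - 1) / (5 * n * (n - 1))
  else 0

open Finset

theorem sum_mul_eq_of_detailed_balance {ι R : Type*} [CommSemiring R] (s : Finset ι)
    (P : ι → ι → R) (π : ι → R) {x : ι} (hbalance : ∀ y ∈ s, π y * P y x = π x * P x y)
    (hrow : ∑ y ∈ s, P x y = 1) :
    ∑ y ∈ s, P y x * π y = π x :=
  calc ∑ y ∈ s, P y x * π y = ∑ y ∈ s, π x * P x y :=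
        sum_congr rfl fun y hy => by rw [mul_comm, hbalance y hy]
    _ = π x := by rw [← mul_sum, hrow, mul_one]

theorem zeroChain_eq_zero {n x y : ℕ} (h₁ : y ≠ x + 1) (h₂ : x ≠ y + 1) (h₃ : y ≠ x) :
    zeroChain n x y = 0 := by
  simp [zeroChain, h₁, h₂, h₃]

theorem zeroChain_succ_left (n x : ℕ) :
    zeroChain n (x + 1) x = 2 * (x + 1) * x / (5 * n * (n - 1)) := by
  simp [zeroChain, show x ≠ x + 1 + 1 by omega]

theorem zeroChain_succ_right (n x : ℕ) :
    zeroChain n x (x + 1) = 6 * x * ((n : ℝ) - x) / (5 * n * (n - 1)) := by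
  simp [zeroChain]

theorem zeroChain_self (n x : ℕ) :
    zeroChain n x x = 1 - 2 * x * (3 * (n : ℝ) - 2 * x - 1) / (5 * n * (n - 1)) := by
  simp [zeroChain]

theorem cast_choose_succ_mul (n k : ℕ) :
    (n.choose (k + 1) : ℝ) * (k + 1) = n.choose k * ((n : ℝ) - k) := by
  rcases le_or_gt k n with hk | hk
  · rw [← Nat.cast_sub hk]
    exact_mod_cast Nat.choose_succ_right_eq n k
  · simp [Nat.choose_eq_zero_of_lt hk, Nat.choose_eq_zero_of_lt (hk.trans (Nat.lt_succ_self k))]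

theorem zeroChain_detailed_balance_succ (n x : ℕ) (c : ℝ) :
    3 ^ x * (n.choose x : ℝ) / c * zeroChain n x (x + 1)
      = 3 ^ (x + 1) * (n.choose (x + 1) : ℝ) / c * zeroChain n (x + 1) x := by
  rw [zeroChain_succ_right, zeroChain_succ_left, div_mul_div_comm, div_mul_div_comm]
  congr 1
  linear_combination (-6 * (x : ℝ) * 3 ^ x) * cast_choose_succ_mul n x

theorem zeroChain_detailed_balance (n x y : ℕ) (c : ℝ) :
    3 ^ x * (n.choose x : ℝ) / c * zeroChain n x y
      = 3 ^ y * (n.choose y : ℝ) / c * zeroChain n y x := by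
  by_cases h₁ : y = x + 1
  · subst h₁; exact zeroChain_detailed_balance_succ n x c
  by_cases h₂ : x = y + 1
  · subst h₂; exact (zeroChain_detailed_balance_succ n y c).symm
  by_cases h₃ : y = x
  · rw [h₃]
  rw [zeroChain_eq_zero h₁ h₂ h₃, zeroChain_eq_zero h₂ h₁ (Ne.symm h₃), mul_zero, mul_zero]

theorem sum_Icc_zeroChain_eq {n k : ℕ} (hk : k + 1 ≤ n) :
    ∑ y ∈ Icc 1 n, zeroChain n (k + 1) y
      = zeroChain n (k + 1) k + zeroChain n (k + 1) (k + 1) + zeroChain n (k + 1) (k + 2) := by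
  have hboundary : ∑ y ∈ Icc 1 n, zeroChain n (k + 1) y
      = ∑ y ∈ Icc 0 (n + 1), zeroChain n (k + 1) y := by
    refine sum_subset (Icc_subset_Icc (Nat.zero_le 1) (Nat.le_succ n)) fun y hy hy' => ?_
    simp only [mem_Icc] at hy hy'
    obtain rfl | rfl : y = 0 ∨ y = n + 1 := by omega
    · rcases k with _ | j
      · simp [zeroChain_succ_left]
      · exact zeroChain_eq_zero (by omega) (by omega) (by omega)
    · rcases eq_or_lt_of_le hk with rfl | hlt
      · simp [zeroChain_succ_right]
      · exact zeroChain_eq_zero (by omega) (by omega) (by omega)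
  have hneighbours : ∑ y ∈ Icc 0 (n + 1), zeroChain n (k + 1) y
      = ∑ y ∈ {k, k + 1, k + 2}, zeroChain n (k + 1) y := by
    refine (sum_subset (fun y hy => ?_) fun y _ hy => zeroChain_eq_zero ?_ ?_ ?_).symm <;>
      simp only [mem_insert, mem_singleton, mem_Icc] at hy ⊢ <;> omega
  rw [hboundary, hneighbours, sum_insert (by simp), sum_insert (by simp), sum_singleton, add_assoc]

theorem sum_Icc_zeroChain_eq_one {n x : ℕ} (hn : 2 ≤ n) (hx : x ∈ Icc 1 n) :
    ∑ y ∈ Icc 1 n, zeroChain n x y = 1 := by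
  obtain ⟨hx₁, hxn⟩ := mem_Icc.mp hx
  obtain ⟨k, rfl⟩ : ∃ k, x = k + 1 := ⟨x - 1, by omega⟩
  have hn' : (2 : ℝ) ≤ n := by exact_mod_cast hn
  have hD : 5 * (n : ℝ) * (n - 1) ≠ 0 := by nlinarith
  rw [sum_Icc_zeroChain_eq hxn, zeroChain_succ_left, zeroChain_self, zeroChain_succ_right]
  field_simp
  push_cast
  ring

/-- The distribution `π₀(x) = 3^x C(n,x)/(4^n − 1)` is stationary for the zero chain:
for every `x ∈ {1,…,n}`, `Σ_{y=1}^n P(y,x) π₀(y) = π₀(x)`. -/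
theorem stmt_7 (n : ℕ) (hn : 2 ≤ n)
    (π₀ : ℕ → ℝ) (hπ₀ : ∀ x, π₀ x = 3 ^ x * (n.choose x : ℝ) / (4 ^ n - 1)) :
    ∀ x ∈ Finset.Icc 1 n,
      ∑ y ∈ Finset.Icc 1 n, zeroChain n y x * π₀ y = π₀ x := by
  intro x hx
  refine sum_mul_eq_of_detailed_balance _ _ _ (fun y _ => ?_) (sum_Icc_zeroChain_eq_one hn hx)
  rw [hπ₀, hπ₀]
  exact zeroChain_detailed_balance n y x _
end

section
/- For the accelerated zero chain starting at x = 1 and moving right with probability 3(n−x)/(3n−2x−1) at position x, the probability of moving right in each of the first t consecutive steps (thus reaching position t+1) is at least 1 − t²/n. Equivalently: ∏_{x=1}^{t} 3(n−x)/(3n−2x−1) ≥ 1 − t²/n. -/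
/-! Every factor with `x ≤ t` is at least `1 - t/n`, so the product is at least `(1 - t/n)^t`,
which Bernoulli's inequality bounds below by `1 - t²/n`. -/

noncomputable def rightMoveProb (n x : ℕ) : ℝ := 3 * ((n : ℝ) - x) / (3 * (n : ℝ) - 2 * x - 1)

lemma one_sub_div_le_rightMoveProb {n t x : ℕ} (hxt : x ≤ t) (htn : t < n) :
    1 - (t : ℝ) / n ≤ rightMoveProb n x := by
  have hxt' : (x : ℝ) ≤ t := mod_cast hxt
  have htn' : (t : ℝ) + 1 ≤ n := mod_cast htn
  have hx : (0 : ℝ) ≤ x := x.cast_nonneg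
  rw [rightMoveProb, one_sub_div (by linarith), div_le_div_iff₀ (by linarith) (by linarith)]
  nlinarith

lemma one_sub_sq_div_le_prod_rightMoveProb {n t : ℕ} (htn : t < n) :
    1 - (t : ℝ) ^ 2 / n ≤ ∏ x ∈ Finset.Icc 1 t, rightMoveProb n x := by
  have htn' : (t : ℝ) < n := mod_cast htn
  have hn : (0 : ℝ) < n := by linarith
  have hstep : 0 ≤ 1 - (t : ℝ) / n := by rw [sub_nonneg, div_le_one hn]; exact htn'.le
  calc 1 - (t : ℝ) ^ 2 / n = 1 + t * -((t : ℝ) / n) := by ring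
    _ ≤ (1 + -((t : ℝ) / n)) ^ t := one_add_mul_le_pow (by linarith) t
    _ = ∏ _x ∈ Finset.Icc 1 t, (1 - (t : ℝ) / n) := by simp [sub_eq_add_neg]
    _ ≤ ∏ x ∈ Finset.Icc 1 t, rightMoveProb n x :=
      Finset.prod_le_prod (fun _ _ => hstep)
        fun x hx => one_sub_div_le_rightMoveProb (Finset.mem_Icc.1 hx).2 htn

theorem stmt_10_general (n t : ℕ) (htn : t < n) :
    (1 : ℝ) - (t : ℝ) ^ 2 / n ≤
      ∏ x ∈ Finset.Icc 1 t, (3 * ((n : ℝ) - x)) / (3 * (n : ℝ) - 2 * x - 1) :=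
  one_sub_sq_div_le_prod_rightMoveProb htn

/-- The probability that the accelerated zero chain moves right in each of the first
`t` steps starting from `x = 1`, i.e. the product of the right-move probabilities
`3(n−x)/(3n−2x−1)` for `x = 1,…,t`, is at least `1 − t²/n`. -/
theorem stmt_10 (n t : ℕ) (ht : 0 < t) (htn : t < n) :
    (1 : ℝ) - (t : ℝ) ^ 2 / n ≤
      ∏ x ∈ Finset.Icc 1 t, (3 * ((n : ℝ) - x)) / (3 * (n : ℝ) - 2 * x - 1) :=
  stmt_10_general n t htn
end

section
/- (Moment generating function of geometric sum) Let W(x) ~ Geo(βx/n) be independent geometric random variables (number of trials until first success, success probability βx/n) for x = 1,…,t, with 0 < β ≤ 1 and βt ≤ n. Let W = Σ_{x=1}^t W(x). Then with λ chosen so e^λ = 1/(1 − β/(2n)), one has E[e^{λW}] = ∏_{x=1}^t x/(x − 1/2) = t!Γ(1/2)/Γ(t+1/2) ≤ 2√t, and consequently Pr(W ≥ C·(n ln t)/β) ≤ 2 t^{(1−C)/2} for any C > 1. -/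
/-!
A `Geo(p)` variable has `E e^{λW} = p e^λ / (1 - (1 - p) e^λ)`, which at `e^λ = 1/(1 - q)`
equals `p / (p - q)`; for `p = βx/n`, `q = β/(2n)` this is `x / (x - 1/2)`. By independence
the moment generating function of the sum is the product of these factors, and the product is
at most `2√t` by induction, because `t (t + 1) ≤ (t + 1/2)²`. Since `λ = -log (1 - q) ≥ q`,
Markov's inequality for `e^{λW}` at level `C n ln t / β` gives the factor `t^{-C/2}`.
-/

open MeasureTheory ProbabilityTheory Finset

namespace ProbabilityTheory

def IsGeometric {Ω : Type*} [MeasurableSpace Ω] (μ : Measure Ω) (N : Ω → ℕ) (p : ℝ) :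
    Prop :=
  ∀ k : ℕ, 1 ≤ k → μ {ω | N ω = k} = ENNReal.ofReal ((1 - p) ^ (k - 1) * p)

namespace IsGeometric

variable {Ω : Type*} [MeasurableSpace Ω] {μ : Measure Ω} {N : Ω → ℕ} {p : ℝ}

lemma measure_eq_succ (hN : IsGeometric μ N p) (k : ℕ) :
    μ {ω | N ω = k + 1} = ENNReal.ofReal ((1 - p) ^ k * p) := by
  simpa using hN (k + 1) le_add_self

lemma tsum_measure_eq_succ (hN : IsGeometric μ N p) (hp0 : 0 < p) (hp1 : p ≤ 1) :
    ∑' k : ℕ, μ {ω | N ω = k + 1} = 1 := by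
  have h1p : 0 ≤ 1 - p := by linarith
  have h1p' : 1 - p < 1 := by linarith
  simp_rw [hN.measure_eq_succ]
  rw [← ENNReal.ofReal_tsum_of_nonneg (fun k => by positivity)
    ((summable_geometric_of_lt_one h1p h1p').mul_right p), tsum_mul_right,
    tsum_geometric_of_lt_one h1p h1p', sub_sub_cancel, inv_mul_cancel₀ hp0.ne',
    ENNReal.ofReal_one]

lemma measure_eq_zero [IsProbabilityMeasure μ] (hN : IsGeometric μ N p) (hmeas : Measurable N)
    (hp0 : 0 < p) (hp1 : p ≤ 1) : μ {ω | N ω = 0} = 0 := by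
  have hpos : {ω | N ω = 0}ᶜ = ⋃ k : ℕ, {ω | N ω = k + 1} := by
    ext ω
    simp [Nat.exists_eq_add_one]
  have hmeas0 : MeasurableSet {ω | N ω = 0} := hmeas (measurableSet_singleton 0)
  rw [← compl_compl {ω | N ω = 0}, prob_compl_eq_zero_iff hmeas0.compl, hpos, measure_iUnion,
    hN.tsum_measure_eq_succ hp0 hp1]
  · intro i j hij
    exact Set.disjoint_left.2 fun ω hi hj => hij (by simp_all)
  · exact fun k => hmeas (measurableSet_singleton _)

lemma lintegral_exp_mul [IsProbabilityMeasure μ] (hN : IsGeometric μ N p) (hmeas : Measurable N)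
    (hp0 : 0 < p) (hp1 : p ≤ 1) {s : ℝ} (hs : (1 - p) * Real.exp s < 1) :
    ∫⁻ ω, ENNReal.ofReal (Real.exp (s * N ω)) ∂μ
      = ENNReal.ofReal (p * Real.exp s / (1 - (1 - p) * Real.exp s)) := by
  have hr : 0 ≤ (1 - p) * Real.exp s := mul_nonneg (by linarith) (Real.exp_pos s).le
  have hterm (k : ℕ) : ENNReal.ofReal (Real.exp (s * (k + 1 : ℕ))) * μ {ω | N ω = k + 1}
      = ENNReal.ofReal (p * Real.exp s * ((1 - p) * Real.exp s) ^ k) := by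
    rw [hN.measure_eq_succ, ← ENNReal.ofReal_mul (Real.exp_pos _).le]
    congr 1
    rw [Nat.cast_succ, mul_add_one, Real.exp_add, mul_comm s, Real.exp_nat_mul, mul_pow]
    ring
  rw [← lintegral_map (f := fun k : ℕ => ENNReal.ofReal (Real.exp (s * k))) measurable_from_top
    hmeas, lintegral_countable', tsum_eq_zero_add' ENNReal.summable]
  have hmap (k : ℕ) : μ.map N {k} = μ {ω | N ω = k} :=
    Measure.map_apply hmeas (measurableSet_singleton k)
  simp_rw [hmap, hN.measure_eq_zero hmeas hp0 hp1, mul_zero, zero_add, hterm]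
  rw [← ENNReal.ofReal_tsum_of_nonneg (fun k => by positivity)
    ((summable_geometric_of_lt_one hr hs).mul_left _), tsum_mul_left,
    tsum_geometric_of_lt_one hr hs, div_eq_mul_inv]

lemma integrable_exp_mul [IsProbabilityMeasure μ] (hN : IsGeometric μ N p)
    (hmeas : Measurable N) (hp0 : 0 < p) (hp1 : p ≤ 1) {s : ℝ} (hs : (1 - p) * Real.exp s < 1) :
    Integrable (fun ω => Real.exp (s * N ω)) μ := by
  refine ⟨by fun_prop, ?_⟩
  rw [hasFiniteIntegral_iff_ofReal (ae_of_all _ fun ω => (Real.exp_pos _).le),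
    hN.lintegral_exp_mul hmeas hp0 hp1 hs]
  exact ENNReal.ofReal_lt_top

lemma mgf_eq [IsProbabilityMeasure μ] (hN : IsGeometric μ N p) (hmeas : Measurable N)
    (hp0 : 0 < p) (hp1 : p ≤ 1) {s : ℝ} (hs : (1 - p) * Real.exp s < 1) :
    mgf (fun ω => (N ω : ℝ)) μ s = p * Real.exp s / (1 - (1 - p) * Real.exp s) := by
  have hden : 0 < 1 - (1 - p) * Real.exp s := sub_pos.2 hs
  rw [mgf, integral_eq_lintegral_of_nonneg_ae (ae_of_all _ fun ω => (Real.exp_pos _).le)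
    (by fun_prop), hN.lintegral_exp_mul hmeas hp0 hp1 hs, ENNReal.toReal_ofReal (by positivity)]

lemma one_sub_mul_exp_lt_one {q s : ℝ} (hqp : q < p) (hp1 : p ≤ 1)
    (hs : Real.exp s = (1 - q)⁻¹) : (1 - p) * Real.exp s < 1 := by
  rw [hs, mul_inv_lt_iff₀ (by linarith), one_mul]
  linarith

lemma mgf_eq_div_sub [IsProbabilityMeasure μ] (hN : IsGeometric μ N p) (hmeas : Measurable N)
    {q s : ℝ} (hq : 0 ≤ q) (hqp : q < p) (hp1 : p ≤ 1) (hs : Real.exp s = (1 - q)⁻¹) :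
    mgf (fun ω => (N ω : ℝ)) μ s = p / (p - q) := by
  rw [hN.mgf_eq hmeas (by linarith) hp1 (one_sub_mul_exp_lt_one hqp hp1 hs), hs]
  have h1q : 1 - q ≠ 0 := by linarith
  rw [show 1 - (1 - p) * (1 - q)⁻¹ = (p - q) * (1 - q)⁻¹ by field_simp; ring,
    mul_div_mul_right _ _ (inv_ne_zero h1q)]

end IsGeometric

lemma natCast_sum_eq_sum_natCast {Ω ι : Type*} [Fintype ι] (W : ι → Ω → ℕ) :
    (fun ω => ((∑ i, W i ω : ℕ) : ℝ)) = ∑ i, fun ω => (W i ω : ℝ) := by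
  ext ω
  simp

section Sum

variable {Ω ι : Type*} [MeasurableSpace Ω] {μ : Measure Ω} {W : ι → Ω → ℕ}

lemma iIndepFun.natCast (hindep : iIndepFun W μ) : iIndepFun (fun i ω => (W i ω : ℝ)) μ :=
  hindep.comp _ fun _ => measurable_from_top

variable [IsProbabilityMeasure μ] [Fintype ι] {p : ι → ℝ} {q s : ℝ}

lemma mgf_sum_of_isGeometric (hmeas : ∀ i, Measurable (W i)) (hindep : iIndepFun W μ)
    (hW : ∀ i, IsGeometric μ (W i) (p i)) (hq : 0 ≤ q) (hqp : ∀ i, q < p i)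
    (hp1 : ∀ i, p i ≤ 1) (hs : Real.exp s = (1 - q)⁻¹) :
    mgf (fun ω => ((∑ i, W i ω : ℕ) : ℝ)) μ s = ∏ i, p i / (p i - q) := by
  rw [natCast_sum_eq_sum_natCast, hindep.natCast.mgf_sum (fun i => by fun_prop)]
  exact prod_congr rfl fun i _ => (hW i).mgf_eq_div_sub (hmeas i) hq (hqp i) (hp1 i) hs

lemma integrable_exp_mul_sum_of_isGeometric (hmeas : ∀ i, Measurable (W i))
    (hindep : iIndepFun W μ) (hW : ∀ i, IsGeometric μ (W i) (p i)) (hq : 0 ≤ q)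
    (hqp : ∀ i, q < p i) (hp1 : ∀ i, p i ≤ 1) (hs : Real.exp s = (1 - q)⁻¹) :
    Integrable (fun ω => Real.exp (s * ((∑ i, W i ω : ℕ) : ℝ))) μ := by
  have := hindep.natCast.integrable_exp_mul_sum (fun i => by fun_prop) (s := univ) (t := s)
    fun i _ => (hW i).integrable_exp_mul (hmeas i) (by linarith [hqp i]) (hp1 i)
      (IsGeometric.one_sub_mul_exp_lt_one (hqp i) (hp1 i) hs)
  rwa [← natCast_sum_eq_sum_natCast] at this

end Sum

end ProbabilityTheory

lemma prod_fin_eq_prod_Icc {M : Type*} [CommMonoid M] (f : ℕ → M) (t : ℕ) :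
    ∏ i : Fin t, f (i + 1) = ∏ k ∈ Icc 1 t, f k := by
  rw [Fin.prod_univ_eq_prod_range (fun i => f (i + 1)), ← Ico_add_one_right_eq_Icc,
    prod_Ico_eq_prod_range, Nat.add_sub_cancel]
  simp only [add_comm]

lemma prod_Icc_div_sub_half_le_two_sqrt {t : ℕ} (ht : 0 < t) :
    ∏ x ∈ Icc 1 t, (x : ℝ) / ((x : ℝ) - 1 / 2) ≤ 2 * Real.sqrt t := by
  induction t, ht using Nat.le_induction with
  | base => norm_num
  | succ t ht ih =>
    have hpos : (0 : ℝ) < t + 1 - 1 / 2 := by linarith [(Nat.cast_nonneg t : (0 : ℝ) ≤ t)]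
    have key : Real.sqrt t * ((t + 1) / (t + 1 - 1 / 2)) ≤ Real.sqrt (t + 1) := by
      rw [Real.le_sqrt (by positivity) (by positivity), mul_pow, Real.sq_sqrt (by positivity),
        div_pow, ← mul_div_assoc, div_le_iff₀ (by positivity)]
      nlinarith
    rw [prod_Icc_succ_top (by omega)]
    push_cast
    calc _ ≤ 2 * Real.sqrt t * ((t + 1) / (t + 1 - 1 / 2)) := by gcongr
      _ ≤ 2 * Real.sqrt (t + 1) := by linarith

lemma le_of_exp_eq_inv_one_sub {q s : ℝ} (hq : q < 1) (hs : Real.exp s = (1 - q)⁻¹) :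
    q ≤ s := by
  rw [← Real.exp_le_exp, hs, le_inv_comm₀ (Real.exp_pos q) (by linarith), ← Real.exp_neg]
  linarith [Real.add_one_le_exp (-q)]

lemma div_two_mul_lt_mul_div {β m n : ℝ} (hβ : 0 < β) (hn : 0 < n) (hm : 1 / 2 < m) :
    β / (2 * n) < β * m / n := by
  rw [div_lt_div_iff₀ (by positivity) hn]
  nlinarith [mul_pos (mul_pos hβ hn) (sub_pos.2 hm)]

lemma exp_neg_mul_le_rpow_neg {t n β s C : ℝ} (ht : 1 ≤ t) (hn : 0 < n) (hβ : 0 < β)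
    (hC : 0 ≤ C) (hs : β / (2 * n) ≤ s) :
    Real.exp (-s * (C * (n * Real.log t) / β)) ≤ t ^ (-(C / 2)) := by
  have hlog : 0 ≤ Real.log t := Real.log_nonneg ht
  rw [Real.rpow_def_of_pos (by linarith), Real.exp_le_exp]
  calc -s * (C * (n * Real.log t) / β) ≤ -(β / (2 * n)) * (C * (n * Real.log t) / β) := by
        gcongr
    _ = Real.log t * -(C / 2) := by
        field_simp

lemma rpow_neg_half_mul_two_sqrt {t : ℝ} (ht : 0 < t) (C : ℝ) :
    t ^ (-(C / 2)) * (2 * Real.sqrt t) = 2 * t ^ ((1 - C) / 2) := by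
  rw [Real.sqrt_eq_rpow, mul_left_comm, ← Real.rpow_add ht]
  ring_nf

lemma div_div_sub_eq {β m n : ℝ} (hβ : β ≠ 0) (hn : n ≠ 0) :
    β * m / n / (β * m / n - β / (2 * n)) = m / (m - 1 / 2) := by
  rw [show β * m / n - β / (2 * n) = β / n * (m - 1 / 2) by field_simp,
    show β * m / n = β / n * m by ring, mul_div_mul_left _ _ (div_ne_zero hβ hn)]

open MeasureTheory ProbabilityTheory in
theorem stmt_16_general {Ω : Type*} [MeasurableSpace Ω] (μ : Measure Ω) [IsProbabilityMeasure μ]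
    (t n : ℕ) (ht : 0 < t) (hn : 0 < n) (β : ℝ) (hβ0 : 0 < β)
    (hβt : β * t ≤ n)
    (W : Fin t → Ω → ℕ) (hmeas : ∀ x, Measurable (W x))
    (hindep : iIndepFun W μ)
    (hgeom : ∀ x : Fin t, ∀ k : ℕ, 1 ≤ k →
      μ {ω | W x ω = k}
        = ENNReal.ofReal ((1 - β * ((x : ℕ) + 1) / n) ^ (k - 1) * (β * ((x : ℕ) + 1) / n)))
    (lam : ℝ) (hlam : Real.exp lam = 1 / (1 - β / (2 * n))) :
    (∫ ω, Real.exp (lam * (∑ x, W x ω : ℕ)) ∂μ)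
        = ∏ x ∈ Finset.Icc 1 t, (x : ℝ) / ((x : ℝ) - 1 / 2) ∧
      ∏ x ∈ Finset.Icc 1 t, (x : ℝ) / ((x : ℝ) - 1 / 2) ≤ 2 * Real.sqrt t ∧
      ∀ C : ℝ, 1 < C →
        (μ {ω | C * (n * Real.log t) / β ≤ (∑ x, W x ω : ℕ)}).toReal
          ≤ 2 * (t : ℝ) ^ ((1 - C) / 2) := by
  have hn0 : (0 : ℝ) < n := by exact_mod_cast hn
  have ht1 : (1 : ℝ) ≤ t := by exact_mod_cast ht
  set q := β / (2 * n)
  have hlam' : Real.exp lam = (1 - q)⁻¹ := by rw [hlam, one_div]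
  have hparam (x : Fin t) : q < β * ((x : ℕ) + 1) / n ∧ β * ((x : ℕ) + 1) / n ≤ 1 := by
    have hx0 : (0 : ℝ) ≤ (x : ℕ) := Nat.cast_nonneg _
    have hx : ((x : ℕ) : ℝ) + 1 ≤ t := by exact_mod_cast x.2
    refine ⟨div_two_mul_lt_mul_div hβ0 hn0 (by linarith), (div_le_one hn0).2 ?_⟩
    nlinarith
  have hq0 : 0 ≤ q := by positivity
  have hqlam : q ≤ lam := le_of_exp_eq_inv_one_sub
    ((hparam ⟨0, ht⟩).1.trans_le (hparam ⟨0, ht⟩).2) hlam'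
  have hmgf : mgf (fun ω => ((∑ x, W x ω : ℕ) : ℝ)) μ lam
      = ∏ x ∈ Finset.Icc 1 t, (x : ℝ) / ((x : ℝ) - 1 / 2) := by
    rw [mgf_sum_of_isGeometric hmeas hindep hgeom hq0 (fun x => (hparam x).1)
      (fun x => (hparam x).2) hlam', ← prod_fin_eq_prod_Icc]
    push_cast
    exact prod_congr rfl fun x _ => div_div_sub_eq hβ0.ne' hn0.ne'
  have hprod := prod_Icc_div_sub_half_le_two_sqrt ht
  refine ⟨hmgf, hprod, fun C hC => ?_⟩
  calc _ ≤ Real.exp (-lam * (C * (n * Real.log t) / β))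
        * mgf (fun ω => ((∑ x, W x ω : ℕ) : ℝ)) μ lam :=
        measure_ge_le_exp_mul_mgf _ (hq0.trans hqlam)
          (integrable_exp_mul_sum_of_isGeometric hmeas hindep hgeom hq0 (fun x => (hparam x).1)
            (fun x => (hparam x).2) hlam')
    _ ≤ (t : ℝ) ^ (-(C / 2)) * (2 * Real.sqrt t) :=
        mul_le_mul (exp_neg_mul_le_rpow_neg ht1 hn0 hβ0 (by linarith) hqlam) (hmgf ▸ hprod)
          mgf_nonneg (by positivity)
    _ = 2 * (t : ℝ) ^ ((1 - C) / 2) := rpow_neg_half_mul_two_sqrt (by linarith) C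

open MeasureTheory ProbabilityTheory in
/-- MGF of a sum of independent geometrics: let `W x ~ Geo(βx/n)` (number of trials
until first success) for `x = 1,…,t` be independent, `0 < β ≤ 1`, `βt ≤ n`, and
`W = Σ_x W x`.  With `e^λ = 1/(1 − β/(2n))` one has
`E[e^{λW}] = ∏_{x=1}^t x/(x − 1/2) ≤ 2√t`, and consequently
`Pr(W ≥ C n ln t / β) ≤ 2 t^{(1−C)/2}` for any `C > 1`. -/
theorem stmt_16 {Ω : Type*} [MeasurableSpace Ω] (μ : Measure Ω) [IsProbabilityMeasure μ]
    (t n : ℕ) (ht : 0 < t) (hn : 0 < n) (β : ℝ) (hβ0 : 0 < β) (hβ1 : β ≤ 1)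
    (hβt : β * t ≤ n)
    (W : Fin t → Ω → ℕ) (hmeas : ∀ x, Measurable (W x))
    (hindep : iIndepFun W μ)
    (hgeom : ∀ x : Fin t, ∀ k : ℕ, 1 ≤ k →
      μ {ω | W x ω = k}
        = ENNReal.ofReal ((1 - β * ((x : ℕ) + 1) / n) ^ (k - 1) * (β * ((x : ℕ) + 1) / n)))
    (lam : ℝ) (hlam : Real.exp lam = 1 / (1 - β / (2 * n))) :
    (∫ ω, Real.exp (lam * (∑ x, W x ω : ℕ)) ∂μ)
        = ∏ x ∈ Finset.Icc 1 t, (x : ℝ) / ((x : ℝ) - 1 / 2) ∧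
      ∏ x ∈ Finset.Icc 1 t, (x : ℝ) / ((x : ℝ) - 1 / 2) ≤ 2 * Real.sqrt t ∧
      ∀ C : ℝ, 1 < C →
        (μ {ω | C * (n * Real.log t) / β ≤ (∑ x, W x ω : ℕ)}).toReal
          ≤ 2 * (t : ℝ) ^ ((1 - C) / 2) :=
  stmt_16_general μ t n ht hn β hβ0 hβt W hmeas hindep hgeom lam hlam
end
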